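/- Target Score Identity with scaling: let α ≠ 0 and Y = αX + W, so that p_Y(y) = ∫ p_X(x) p_W(y − αx) dx and p_{X|Y}(x|y) = p_X(x) p_W(y − αx) / p_Y(y). Then for every y ∈ ℝ^d, ∇ log p_Y(y) = α^{-1} ∫ ∇ log p_X(x) · p_{X|Y}(x|y) dx. -/

import Mathlib

/-!
Write `I y = ∫ p_W(y - αx) ∇p_X(x) dx`. Moving `y` by `h = α • u` is the same as moving `x` by `u`,
so by the fundamental theorem of calculus on the segment `[x, x + u]` and Fubini,
`p_Y(y + h) - p_Y(y) = ∫₀¹ ⟪α⁻¹ • I(y + ξ • h), h⟫ dξ`; the local domination makes `I` continuous,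
hence `∇p_Y = α⁻¹ • I`. Dividing by `p_Y > 0` and using `∇p_X = p_X ∇log p_X` gives the identity.

The same segment estimate shows that two nearby translates of `x ↦ p_X(x) p_W(y - αx)` differ by
an integrable function; since the convolution of integrable functions exists almost everywhere,
this makes `p_Y(y)` a genuine integral at every `y`.
-/

open MeasureTheory InnerProductSpace Filter Topology
open scoped RealInnerProductSpace

theorem add_smul_sub_smul_add_eq {R M : Type*} [Ring R] [AddCommGroup M] [Module R M]
    (y x v : M) (a : R) : y + a • v - a • (x + v) = y - a • x := by
  rw [smul_add]; abel

section Gradient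

variable {E : Type*} [NormedAddCommGroup E] [InnerProductSpace ℝ E] [CompleteSpace E]

theorem ContDiff.continuous_gradient {f : E → ℝ} (hf : ContDiff ℝ 1 f) :
    Continuous (gradient f) :=
  (toDual ℝ E).symm.continuous.comp (hf.continuous_fderiv one_ne_zero)

theorem HasGradientAt.log {f : E → ℝ} {G x : E} (hf : HasGradientAt f G x) (hx : f x ≠ 0) :
    HasGradientAt (fun z => Real.log (f z)) ((f x)⁻¹ • G) x := by
  rw [hasGradientAt_iff_hasFDerivAt, map_smul]
  exact (Real.hasDerivAt_log hx).comp_hasFDerivAt x hf.hasFDerivAt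

theorem ContDiff.sub_eq_integral_inner_gradient {f : E → ℝ} (hf : ContDiff ℝ 1 f) (x u : E) :
    f (x + u) - f x = ∫ ξ in (0 : ℝ)..1, ⟪gradient f (x + ξ • u), u⟫ := by
  have hline : ∀ t : ℝ, HasDerivAt (fun ξ : ℝ => f (x + ξ • u)) ⟪gradient f (x + t • u), u⟫ t := by
    intro t
    have hx : HasDerivAt (fun ξ : ℝ => x + ξ • u) u t := by
      simpa using ((hasDerivAt_id t).smul_const u).const_add x
    exact (hf.differentiable one_ne_zero _).hasGradientAt.hasFDerivAt.comp_hasDerivAt t hx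
  have hcont : Continuous fun t : ℝ => ⟪gradient f (x + t • u), u⟫ := by
    have := hf.continuous_gradient
    fun_prop
  rw [intervalIntegral.integral_eq_sub_of_hasDerivAt (fun t _ => hline t)
    (hcont.intervalIntegrable 0 1)]
  simp

theorem hasGradientAt_of_sub_eq_integral {f : E → ℝ} {G : E → E} {y : E} (hG : Continuous G)
    (hf : ∀ᶠ h in 𝓝 0, f (y + h) - f y = ∫ ξ in (0 : ℝ)..1, ⟪G (y + ξ • h), h⟫) :
    HasGradientAt f (G y) y := by
  rw [hasGradientAt_iff_hasFDerivAt, hasFDerivAt_iff_isLittleO_nhds_zero,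
    Asymptotics.isLittleO_iff]
  intro c hc
  obtain ⟨δ, hδ, hGδ⟩ := Metric.continuousAt_iff.mp (hG.continuousAt (x := y)) c hc
  filter_upwards [hf, Metric.ball_mem_nhds 0 hδ] with h hfh hh
  have hint : ∀ z : E, IntervalIntegrable (fun ξ : ℝ => ⟪G (y + ξ • z), h⟫) volume 0 1 :=
    fun z => by apply Continuous.intervalIntegrable; fun_prop
  have hdiff : f (y + h) - f y - toDual ℝ E (G y) h
      = ∫ ξ in (0 : ℝ)..1, ⟪G (y + ξ • h) - G y, h⟫ := by
    simp_rw [inner_sub_left]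
    rw [intervalIntegral.integral_sub (hint h) (by simp), hfh]
    simp [toDual_apply_apply]
  rw [hdiff]
  refine (intervalIntegral.norm_integral_le_of_norm_le_const (C := c * ‖h‖)
    fun ξ hξ => ?_).trans_eq (by norm_num)
  rw [Set.uIoc_of_le zero_le_one] at hξ
  have hyξ : dist (y + ξ • h) y < δ := by
    rw [dist_self_add_left, norm_smul, Real.norm_of_nonneg hξ.1.le]
    exact lt_of_le_of_lt (mul_le_of_le_one_left (norm_nonneg h) hξ.2) (mem_ball_zero_iff.mp hh)
  calc ‖⟪G (y + ξ • h) - G y, h⟫‖ ≤ ‖G (y + ξ • h) - G y‖ * ‖h‖ := norm_inner_le_norm _ _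
    _ ≤ c * ‖h‖ := by
      gcongr
      simpa [dist_eq_norm] using (hGδ hyξ).le

theorem norm_gradient_shift_mul_le {f k g : E → ℝ} {α ε : ℝ} {y u : E}
    (hbound : ∀ y', dist y' y < ε → ∀ x, ‖gradient f x‖ * k (y' - α • x) ≤ g x)
    (hu : ‖α • u‖ < ε) {ξ : ℝ} (hξ : ξ ∈ Set.Icc (0 : ℝ) 1) (x : E) :
    ‖gradient f (x + ξ • u)‖ * k (y - α • x) ≤ g (x + ξ • u) := by
  have hdist : dist (y + α • (ξ • u)) y < ε := by
    rw [dist_self_add_left, smul_comm, norm_smul, Real.norm_of_nonneg hξ.1]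
    exact lt_of_le_of_lt (mul_le_of_le_one_left (norm_nonneg _) hξ.2) hu
  simpa only [add_smul_sub_smul_add_eq] using hbound _ hdist (x + ξ • u)

end Gradient

section ScaledConvolution

variable {E : Type*} [NormedAddCommGroup E] [InnerProductSpace ℝ E] [FiniteDimensional ℝ E]
  [MeasurableSpace E] [BorelSpace E] {μ : Measure E} {f k g : E → ℝ} {α ε : ℝ} {y u v : E}

theorem integrable_comp_sub_smul_smul_gradient (hf : ContDiff ℝ 1 f) (hk : Continuous k)
    (hk₀ : ∀ w, 0 ≤ k w) (hg : Integrable g μ)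
    (hbound : ∀ x, ‖gradient f x‖ * k (y - α • x) ≤ g x) :
    Integrable (fun x => k (y - α • x) • gradient f x) μ := by
  have := hf.continuous_gradient
  refine hg.mono' (by fun_prop) (Eventually.of_forall fun x => ?_)
  rw [norm_smul, Real.norm_of_nonneg (hk₀ _), mul_comm]
  exact hbound x

theorem continuous_integral_comp_sub_smul_smul_gradient (hf : ContDiff ℝ 1 f)
    (hk : Continuous k) (hk₀ : ∀ w, 0 ≤ k w)
    (hDom : ∀ y, ∃ ε > 0, ∃ g : E → ℝ, Integrable g μ ∧
      ∀ y', dist y' y < ε → ∀ x, ‖gradient f x‖ * k (y' - α • x) ≤ g x) :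
    Continuous fun y => ∫ x, k (y - α • x) • gradient f x ∂μ := by
  have := hf.continuous_gradient
  refine continuous_iff_continuousAt.mpr fun y => ?_
  obtain ⟨ε, hε, g, hg, hbound⟩ := hDom y
  refine continuousAt_of_dominated (Eventually.of_forall fun _ => by fun_prop) ?_ hg
    (Eventually.of_forall fun x => by fun_prop)
  filter_upwards [Metric.ball_mem_nhds y hε] with y' hy'
  refine Eventually.of_forall fun x => ?_
  rw [norm_smul, Real.norm_of_nonneg (hk₀ _), mul_comm]
  exact hbound y' hy' x

section Invariant

variable [μ.IsAddRightInvariant]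

theorem integral_inner_gradient_add_mul (hint : Integrable
      (fun x => k (y + α • v - α • x) • gradient f x) μ) (u : E) :
    ∫ x, ⟪gradient f (x + v), u⟫ * k (y - α • x) ∂μ
      = ⟪∫ x, k (y + α • v - α • x) • gradient f x ∂μ, u⟫ := by
  rw [real_inner_comm, ← integral_inner hint,
    ← integral_add_right_eq_self (fun x => ⟪u, k (y + α • v - α • x) • gradient f x⟫) v]
  congr 1 with x
  rw [add_smul_sub_smul_add_eq, real_inner_smul_right, real_inner_comm, mul_comm]

section SFinite

variable [SFinite μ]

theorem integrable_inner_gradient_shift_mul (hf : ContDiff ℝ 1 f) (hk : Continuous k)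
    (hk₀ : ∀ w, 0 ≤ k w) (hg : Integrable g μ)
    (hbound : ∀ y', dist y' y < ε → ∀ x, ‖gradient f x‖ * k (y' - α • x) ≤ g x)
    (hu : ‖α • u‖ < ε) :
    Integrable (fun p : ℝ × E => ⟪gradient f (p.2 + p.1 • u), u⟫ * k (y - α • p.2))
      ((volume.restrict (Set.Ioc 0 1)).prod μ) := by
  have hgrad := hf.continuous_gradient
  have hcont : Continuous fun p : ℝ × E => ⟪gradient f (p.2 + p.1 • u), u⟫ * k (y - α • p.2) := by
    fun_prop
  have hle : ∀ ξ ∈ Set.Ioc (0 : ℝ) 1, ∀ x,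
      ‖⟪gradient f (x + ξ • u), u⟫ * k (y - α • x)‖ ≤ ‖u‖ * g (x + ξ • u) := fun ξ hξ x =>
    calc ‖⟪gradient f (x + ξ • u), u⟫ * k (y - α • x)‖
        ≤ ‖gradient f (x + ξ • u)‖ * ‖u‖ * k (y - α • x) := by
          rw [norm_mul, Real.norm_of_nonneg (hk₀ _)]
          gcongr
          · exact hk₀ _
          · exact norm_inner_le_norm _ _
      _ ≤ ‖u‖ * g (x + ξ • u) := by
          rw [mul_right_comm, mul_comm]
          gcongr
          exact norm_gradient_shift_mul_le hbound hu (Set.Ioc_subset_Icc_self hξ) x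
  have hslice : ∀ ξ ∈ Set.Ioc (0 : ℝ) 1,
      Integrable (fun x => ⟪gradient f (x + ξ • u), u⟫ * k (y - α • x)) μ := fun ξ hξ =>
    ((hg.comp_add_right (ξ • u)).const_mul ‖u‖).mono'
      (hcont.comp (Continuous.prodMk_right ξ)).aestronglyMeasurable
      (Eventually.of_forall (hle ξ hξ))
  refine (integrable_prod_iff hcont.aestronglyMeasurable).mpr ⟨?_, ?_⟩
  · filter_upwards [ae_restrict_mem measurableSet_Ioc] with ξ hξ using hslice ξ hξ
  · refine (integrableOn_const (C := ‖u‖ * ∫ x, g x ∂μ) measure_Ioc_lt_top.ne).mono'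
      hcont.aestronglyMeasurable.norm.integral_prod_right' ?_
    filter_upwards [ae_restrict_mem measurableSet_Ioc] with ξ hξ
    rw [Real.norm_of_nonneg (integral_nonneg fun _ => norm_nonneg _), ← integral_const_mul,
      ← integral_add_right_eq_self (fun x => ‖u‖ * g x) (ξ • u)]
    exact integral_mono_of_nonneg (Eventually.of_forall fun _ => norm_nonneg _)
      ((hg.comp_add_right (ξ • u)).const_mul ‖u‖) (Eventually.of_forall (hle ξ hξ))

theorem integrable_sub_shift_mul (hf : ContDiff ℝ 1 f) (hk : Continuous k)
    (hk₀ : ∀ w, 0 ≤ k w) (hg : Integrable g μ)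
    (hbound : ∀ y', dist y' y < ε → ∀ x, ‖gradient f x‖ * k (y' - α • x) ≤ g x)
    (hu : ‖α • u‖ < ε) :
    Integrable (fun x => (f (x + u) - f x) * k (y - α • x)) μ := by
  refine (integrable_inner_gradient_shift_mul hf hk hk₀ hg hbound hu).swap.integral_prod_left.congr
    (Eventually.of_forall fun x => ?_)
  simp only [Function.comp, Prod.fst_swap, Prod.snd_swap]
  rw [integral_mul_const, ← intervalIntegral.integral_of_le zero_le_one,
    ← hf.sub_eq_integral_inner_gradient]

theorem integral_sub_shift_mul (hf : ContDiff ℝ 1 f) (hk : Continuous k)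
    (hk₀ : ∀ w, 0 ≤ k w) (hg : Integrable g μ)
    (hbound : ∀ y', dist y' y < ε → ∀ x, ‖gradient f x‖ * k (y' - α • x) ≤ g x)
    (hu : ‖α • u‖ < ε) :
    ∫ x, (f (x + u) - f x) * k (y - α • x) ∂μ
      = ∫ ξ in (0 : ℝ)..1, ∫ x, ⟪gradient f (x + ξ • u), u⟫ * k (y - α • x) ∂μ := by
  rw [intervalIntegral.integral_of_le zero_le_one,
    integral_integral_swap (f := fun ξ x => ⟪gradient f (x + ξ • u), u⟫ * k (y - α • x))
      (integrable_inner_gradient_shift_mul hf hk hk₀ hg hbound hu)]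
  congr 1 with x
  rw [integral_mul_const, ← intervalIntegral.integral_of_le zero_le_one,
    ← hf.sub_eq_integral_inner_gradient]

end SFinite

end Invariant

section Haar

variable [μ.IsAddHaarMeasure]

theorem integrable_mul_comp_sub_smul (hα : α ≠ 0) (hf : ContDiff ℝ 1 f) (hk : Continuous k)
    (hk₀ : ∀ w, 0 ≤ k w) (hfi : Integrable f μ) (hki : Integrable k μ) (hε : 0 < ε)
    (hg : Integrable g μ)
    (hbound : ∀ y', dist y' y < ε → ∀ x, ‖gradient f x‖ * k (y' - α • x) ≤ g x) :
    Integrable (fun x => f x * k (y - α • x)) μ := by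
  have hae : ∀ᵐ y' ∂μ, Integrable (fun x => f x * k (y' - α • x)) μ := by
    have hfα : Integrable (fun x => f (α⁻¹ • x)) μ :=
      (integrable_comp_smul_iff μ f (inv_ne_zero hα)).mpr hfi
    filter_upwards [hfα.ae_convolution_exists (ContinuousLinearMap.mul ℝ ℝ) hki] with y' hy'
    simpa [smul_smul, inv_mul_cancel₀ hα] using
      (integrable_comp_smul_iff μ _ hα).mpr hy'.integrable
  obtain ⟨y', hy'_mem, hy'⟩ := Measure.exists_mem_of_measure_ne_zero_of_ae
    (Metric.measure_ball_pos μ y hε).ne' (ae_restrict_of_ae hae)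
  set u := α⁻¹ • (y' - y)
  have hαu : α • u = y' - y := smul_inv_smul₀ hα _
  have hu : ‖α • u‖ < ε := by rwa [hαu, ← dist_eq_norm]
  have hshift : Integrable (fun x => f (x + u) * k (y - α • x)) μ := by
    refine (hy'.comp_add_right u).congr (Eventually.of_forall fun x => ?_)
    simp only [show y' = y + α • u by rw [hαu]; abel, add_smul_sub_smul_add_eq]
  refine (hshift.sub (integrable_sub_shift_mul hf hk hk₀ hg hbound hu)).congr
    (Eventually.of_forall fun x => ?_)
  simp only [Pi.sub_apply]
  ring

theorem hasGradientAt_integral_mul_comp_sub_smul (hα : α ≠ 0) (hf : ContDiff ℝ 1 f)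
    (hk : Continuous k) (hk₀ : ∀ w, 0 ≤ k w) (hfi : Integrable f μ) (hki : Integrable k μ)
    (hDom : ∀ y, ∃ ε > 0, ∃ g : E → ℝ, Integrable g μ ∧
      ∀ y', dist y' y < ε → ∀ x, ‖gradient f x‖ * k (y' - α • x) ≤ g x) (y : E) :
    HasGradientAt (fun y => ∫ x, f x * k (y - α • x) ∂μ)
      (α⁻¹ • ∫ x, k (y - α • x) • gradient f x ∂μ) y := by
  have hconv : ∀ y, Integrable (fun x => f x * k (y - α • x)) μ := fun y => by
    obtain ⟨ε, hε, g, hg, hbound⟩ := hDom y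
    exact integrable_mul_comp_sub_smul hα hf hk hk₀ hfi hki hε hg hbound
  refine hasGradientAt_of_sub_eq_integral
    ((continuous_integral_comp_sub_smul_smul_gradient hf hk hk₀ hDom).const_smul α⁻¹) ?_
  obtain ⟨ε, hε, g, hg, hbound⟩ := hDom y
  filter_upwards [Metric.ball_mem_nhds 0 hε] with h hh
  set u := α⁻¹ • h
  have hαu : α • u = h := smul_inv_smul₀ hα _
  have hu : ‖α • u‖ < ε := by rwa [hαu, ← mem_ball_zero_iff]
  calc (∫ x, f x * k (y + h - α • x) ∂μ) - ∫ x, f x * k (y - α • x) ∂μ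
      = ∫ x, (f (x + u) - f x) * k (y - α • x) ∂μ := by
        rw [← integral_add_right_eq_self _ u, ← integral_sub ((hconv _).comp_add_right u)
          (hconv y)]
        simp only [← hαu, add_smul_sub_smul_add_eq, sub_mul]
    _ = ∫ ξ in (0 : ℝ)..1, ∫ x, ⟪gradient f (x + ξ • u), u⟫ * k (y - α • x) ∂μ :=
        integral_sub_shift_mul hf hk hk₀ hg hbound hu
    _ = ∫ ξ in (0 : ℝ)..1, ⟪α⁻¹ • ∫ x, k (y + ξ • h - α • x) • gradient f x ∂μ, h⟫ := by
        congr 1 with ξ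
        obtain ⟨ε', hε', g', hg', hbound'⟩ := hDom (y + ξ • h)
        have hint : Integrable (fun x => k (y + α • (ξ • u) - α • x) • gradient f x) μ := by
          rw [smul_comm, hαu]
          exact integrable_comp_sub_smul_smul_gradient hf hk hk₀ hg' (hbound' _ (by simpa))
        rw [integral_inner_gradient_add_mul hint, smul_comm, hαu, real_inner_smul_left,
          ← real_inner_smul_right]

end Haar

end ScaledConvolution

theorem target_score_identity_scaled_general
    (d : ℕ) (α : ℝ) (hα : α ≠ 0)
    (pX pW : EuclideanSpace ℝ (Fin d) → ℝ)
    (hpX_pos : ∀ x, 0 < pX x) (hpW_pos : ∀ w, 0 < pW w)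
    (hpX_diff : ContDiff ℝ 1 pX) (hpW_diff : ContDiff ℝ 1 pW)
    (hpX_prob : ∫ x, pX x = 1) (hpW_prob : ∫ w, pW w = 1)
    (pY : EuclideanSpace ℝ (Fin d) → ℝ)
    (hpY : ∀ y, pY y = ∫ x, pX x * pW (y - α • x))
    (pXgY : EuclideanSpace ℝ (Fin d) → EuclideanSpace ℝ (Fin d) → ℝ)
    (hpXgY : ∀ x y, pXgY x y = pX x * pW (y - α • x) / pY y)
    (hDom : ∀ y, ∃ ε > 0, ∃ g : EuclideanSpace ℝ (Fin d) → ℝ, Integrable g ∧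
      ∀ y', dist y' y < ε → ∀ x, ‖gradient pX x‖ * pW (y' - α • x) ≤ g x) :
    ∀ y, gradient (fun y' => Real.log (pY y')) y
      = α⁻¹ • ∫ x, pXgY x y • gradient (fun x' => Real.log (pX x')) x := by
  intro y
  have hpX_int : Integrable pX := .of_integral_ne_zero (hpX_prob ▸ one_ne_zero)
  have hpW_int : Integrable pW := .of_integral_ne_zero (hpW_prob ▸ one_ne_zero)
  have hpW₀ : ∀ w, 0 ≤ pW w := fun w => (hpW_pos w).le
  have hpY_grad : HasGradientAt pY (α⁻¹ • ∫ x, pW (y - α • x) • gradient pX x) y := by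
    simpa only [← funext hpY] using hasGradientAt_integral_mul_comp_sub_smul hα hpX_diff
      hpW_diff.continuous hpW₀ hpX_int hpW_int hDom y
  have hpY_pos : 0 < pY y := by
    obtain ⟨ε, hε, g, hg, hbound⟩ := hDom y
    rw [hpY]
    exact integral_pos_of_integrable_nonneg_nonzero (x := 0) (by fun_prop)
      (integrable_mul_comp_sub_smul hα hpX_diff hpW_diff.continuous hpW₀ hpX_int hpW_int hε hg
        hbound)
      (fun x => mul_nonneg (hpX_pos x).le (hpW₀ _)) (mul_pos (hpX_pos 0) (hpW_pos _)).ne'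
  rw [(hpY_grad.log hpY_pos.ne').gradient, smul_comm, ← integral_smul]
  congr 2 with x : 1
  rw [hpXgY, ((hpX_diff.differentiable one_ne_zero x).hasGradientAt.log (hpX_pos x).ne').gradient,
    smul_smul, smul_smul]
  congr 1
  field_simp [(hpX_pos x).ne']

/-- **Target Score Identity with scaling** (`Y = αX + W`, `α ≠ 0`):
for every `y`, `∇ log p_Y(y) = α⁻¹ ∫ ∇ log p_X(x) p_{X|Y}(x|y) dx`. -/
theorem target_score_identity_scaled
    (d : ℕ) (hd : 1 ≤ d) (α : ℝ) (hα : α ≠ 0)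
    (pX pW : EuclideanSpace ℝ (Fin d) → ℝ)
    (hpX_pos : ∀ x, 0 < pX x) (hpW_pos : ∀ w, 0 < pW w)
    (hpX_diff : ContDiff ℝ 1 pX) (hpW_diff : ContDiff ℝ 1 pW)
    (hpX_prob : ∫ x, pX x = 1) (hpW_prob : ∫ w, pW w = 1)
    (pY : EuclideanSpace ℝ (Fin d) → ℝ)
    (hpY : ∀ y, pY y = ∫ x, pX x * pW (y - α • x))
    (pXgY : EuclideanSpace ℝ (Fin d) → EuclideanSpace ℝ (Fin d) → ℝ)
    (hpXgY : ∀ x y, pXgY x y = pX x * pW (y - α • x) / pY y)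
    (hInt : ∀ y, Integrable (fun x => ‖gradient pX x‖ * pW (y - α • x)))
    (hDom : ∀ y, ∃ ε > 0, ∃ g : EuclideanSpace ℝ (Fin d) → ℝ, Integrable g ∧
      ∀ y', dist y' y < ε → ∀ x, ‖gradient pX x‖ * pW (y' - α • x) ≤ g x) :
    ∀ y, gradient (fun y' => Real.log (pY y')) y
      = α⁻¹ • ∫ x, pXgY x y • gradient (fun x' => Real.log (pX x')) x :=
  target_score_identity_scaled_general d α hα pX pW hpX_pos hpW_pos hpX_diff hpW_diff hpX_prob
    hpW_prob pY hpY pXgY hpXgY hDom
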